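/- Let N ≥ 2, δ > 0, i ∈ {1, …, N−1}, and let a : B′_δ(0) ⊂ ℝ^{N−1} → ℝ be a C¹ function with a(0) = 0 and ∂_i a(0) = 0. Suppose that the function t ↦ a(t e_i) is not identically zero on {t ∈ ℝ : t e_i ∈ B′_δ(0)}. Then there exist real numbers t₁, t₂ with t₁ e_i, t₂ e_i ∈ B′_δ(0) such that the two vectors t₁ e_i + a(t₁ e_i) e_N and t₂ e_i + a(t₂ e_i) e_N of ℝ^N are linearly independent. -/

import Mathlib

open scoped RealInnerProductSpace
open Metric

noncomputable section

/-- `ℝ^N` as a Euclidean space. -/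
abbrev Euc (N : ℕ) := EuclideanSpace ℝ (Fin N)

/-- real `N × N` matrices. -/
abbrev MatN (N : ℕ) := Matrix (Fin N) (Fin N) ℝ

variable {N : ℕ}

/-- Pucci maximal operator `M⁺(M) = λ tr(M⁻) + Λ tr(M⁺)`, written in terms of the
eigenvalues of the symmetric matrix `M`. -/
noncomputable def pucciSup (lam Lam : ℝ) (M : MatN N) : ℝ :=
  if h : M.IsHermitian then
    ∑ i, (lam * min (h.eigenvalues i) 0 + Lam * max (h.eigenvalues i) 0)
  else 0

/-- Pucci minimal operator `M⁻(M) = λ tr(M⁺) + Λ tr(M⁻)`. -/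
noncomputable def pucciInf (lam Lam : ℝ) (M : MatN N) : ℝ :=
  if h : M.IsHermitian then
    ∑ i, (lam * max (h.eigenvalues i) 0 + Lam * min (h.eigenvalues i) 0)
  else 0

/-- `F` is uniformly elliptic with ellipticity constants `lam ≤ Lam`:
`M⁻(M) ≤ F(M) ≤ M⁺(M)` for every symmetric `M`. -/
def UniformlyElliptic (lam Lam : ℝ) (F : MatN N → ℝ) : Prop :=
  Continuous F ∧ ∀ M : MatN N, M.IsHermitian →
    pucciInf lam Lam M ≤ F M ∧ F M ≤ pucciSup lam Lam M

/-- Hessian matrix of a real function at a point. -/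
noncomputable def hessian (φ : Euc N → ℝ) (x : Euc N) : MatN N :=
  Matrix.of fun i j =>
    iteratedFDeriv ℝ 2 φ x ![EuclideanSpace.single i 1, EuclideanSpace.single j 1]

/-- Viscosity subsolution of `G(x, ∇u, D²u) = f` on `D`: whenever a `C²` test function
`φ` touches `u` from above (`u - φ` has a local max) at `x₀ ∈ D`, then
`G(x₀, ∇φ(x₀), D²φ(x₀)) ≥ f x₀`. -/
def ViscositySubsolution (D : Set (Euc N)) (G : Euc N → Euc N → MatN N → ℝ)
    (f : Euc N → ℝ) (u : Euc N → ℝ) : Prop :=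
  ∀ x₀ ∈ D, ∀ φ : Euc N → ℝ, ContDiffAt ℝ 2 φ x₀ →
    IsLocalMax (fun x => u x - φ x) x₀ → f x₀ ≤ G x₀ (gradient φ x₀) (hessian φ x₀)

/-- Viscosity supersolution of `G(x, ∇u, D²u) = f` on `D`. -/
def ViscositySupersolution (D : Set (Euc N)) (G : Euc N → Euc N → MatN N → ℝ)
    (f : Euc N → ℝ) (u : Euc N → ℝ) : Prop :=
  ∀ x₀ ∈ D, ∀ φ : Euc N → ℝ, ContDiffAt ℝ 2 φ x₀ →
    IsLocalMin (fun x => u x - φ x) x₀ → G x₀ (gradient φ x₀) (hessian φ x₀) ≤ f x₀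

/-- Viscosity solution: both a sub- and a supersolution. -/
def ViscositySolution (D : Set (Euc N)) (G : Euc N → Euc N → MatN N → ℝ)
    (f : Euc N → ℝ) (u : Euc N → ℝ) : Prop :=
  ViscositySubsolution D G f u ∧ ViscositySupersolution D G f u

/-- The degenerate elliptic operator `(x, p, M) ↦ |p|^α (F(M) + h(x)·p)`. -/
noncomputable def degenOp (α : ℝ) (F : MatN N → ℝ) (h : Euc N → Euc N) :
    Euc N → Euc N → MatN N → ℝ :=
  fun x p M => ‖p‖ ^ α * (F M + ⟪h x, p⟫)

/-- the first `N` coordinates `y'` of a point `y = (y', y_N)` of `ℝ^{N+1}`. -/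
noncomputable def projHyp (y : Euc (N + 1)) : Euc N := WithLp.toLp 2 (fun i : Fin N => y i.castSucc)

/-- the last coordinate `y_N` of a point `y = (y', y_N)` of `ℝ^{N+1}`. -/
noncomputable def lastCoord (y : Euc (N + 1)) : ℝ := y (Fin.last N)

/-- the point `(x', s) ∈ ℝ^{N+1}`. -/
noncomputable def withLast (x' : Euc N) (s : ℝ) : Euc (N + 1) := WithLp.toLp 2 (Fin.snoc (α := fun _ => ℝ) (WithLp.ofLp x') s)

/-- the last basis vector `e_N` of `ℝ^{N+1}`. -/
noncomputable def eLast (N : ℕ) : Euc (N + 1) := EuclideanSpace.single (Fin.last N) 1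

end

open Filter Topology

/- The restriction `g(t) = a(t e_i)` vanishes at `0` together with its derivative, so its slope
`g(t)/t` tends to `0`. Given `t₁` with `g(t₁) ≠ 0`, any small `t₂ ≠ 0` whose slope differs from
`g(t₁)/t₁ ≠ 0` gives `t₁ g(t₂) ≠ t₂ g(t₁)`, the nonvanishing of the determinant of the two vectors
in the coordinates `e_i, e_N`. -/

theorem eventually_mul_ne_mul_of_hasDerivAt_zero {g : ℝ → ℝ} (hg : HasDerivAt g 0 0)
    (hg0 : g 0 = 0) {t : ℝ} (ht : g t ≠ 0) : ∀ᶠ s in 𝓝[≠] 0, t * g s ≠ s * g t := by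
  have ht0 : t ≠ 0 := by rintro rfl; exact ht hg0
  have hslope : ∀ᶠ s in 𝓝[≠] 0, slope g 0 s ≠ g t / t :=
    (hasDerivAt_iff_tendsto_slope.mp hg).eventually_ne (div_ne_zero ht ht0).symm
  filter_upwards [hslope, self_mem_nhdsWithin] with s hs (hs0 : s ≠ 0) hmul
  rw [slope_def_field, hg0, sub_zero, sub_zero] at hs
  exact hs (by rw [div_eq_div_iff hs0 ht0]; linarith)

theorem linearIndependent_withLast_smul_pair {N : ℕ} {v : Euc N} (hv : v ≠ 0)
    {t₁ t₂ s₁ s₂ : ℝ} (hdet : t₁ * s₂ ≠ t₂ * s₁) :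
    LinearIndependent ℝ ![withLast (t₁ • v) s₁, withLast (t₂ • v) s₂] := by
  obtain ⟨j, hj⟩ : ∃ j, v j ≠ 0 := by
    by_contra! h
    exact hv (by ext j; simp [h])
  rw [LinearIndependent.pair_iff]
  intro c d hcd
  have hlast := congrArg (· (Fin.last N)) hcd
  have hj' := congrArg (· j.castSucc) hcd
  simp only [withLast, PiLp.add_apply, PiLp.smul_apply, PiLp.zero_apply, Fin.snoc_last,
    Fin.snoc_castSucc, smul_eq_mul] at hlast hj'
  have hcoord : c * t₁ + d * t₂ = 0 := by
    apply mul_right_cancel₀ hj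
    linear_combination hj'
  have hdet' : t₁ * s₂ - t₂ * s₁ ≠ 0 := sub_ne_zero.mpr hdet
  constructor
  · apply mul_right_cancel₀ hdet'
    linear_combination s₂ * hcoord - t₂ * hlast
  · apply mul_right_cancel₀ hdet'
    linear_combination t₁ * hlast - s₁ * hcoord

theorem linearly_independent_graph_vectors_general
    {N : ℕ} (δ : ℝ) (hδ : 0 < δ) (i : Fin N)
    (a : Euc N → ℝ) (ha : ContDiffOn ℝ 1 a (ball (0 : Euc N) δ))
    (ha0 : a 0 = 0)
    (hai : fderiv ℝ a 0 (EuclideanSpace.single i 1) = 0)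
    (hne : ∃ t : ℝ, t • (EuclideanSpace.single i 1 : Euc N) ∈ ball (0 : Euc N) δ ∧
      a (t • EuclideanSpace.single i 1) ≠ 0) :
    ∃ t₁ t₂ : ℝ,
      t₁ • (EuclideanSpace.single i 1 : Euc N) ∈ ball (0 : Euc N) δ ∧
      t₂ • (EuclideanSpace.single i 1 : Euc N) ∈ ball (0 : Euc N) δ ∧
      LinearIndependent ℝ
        ![withLast (t₁ • EuclideanSpace.single i 1) (a (t₁ • EuclideanSpace.single i 1)),
          withLast (t₂ • EuclideanSpace.single i 1) (a (t₂ • EuclideanSpace.single i 1))] := by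
  obtain ⟨t₁, ht₁, hat₁⟩ := hne
  set e : Euc N := EuclideanSpace.single i 1
  have hda : DifferentiableAt ℝ a 0 :=
    (ha.contDiffAt (ball_mem_nhds 0 hδ)).differentiableAt one_ne_zero
  have hline : HasDerivAt (fun s : ℝ => a (s • e)) 0 0 := by
    have hcurve : HasDerivAt (fun s : ℝ => s • e) e 0 := by
      simpa using (hasDerivAt_id (0 : ℝ)).smul_const e
    have := hda.hasFDerivAt.comp_hasDerivAt_of_eq 0 hcurve (zero_smul ℝ e).symm
    rwa [hai] at this
  have hball : ∀ᶠ s in 𝓝 (0 : ℝ), s • e ∈ ball 0 δ :=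
    (continuous_id.smul continuous_const).continuousAt.preimage_mem_nhds
      (by simpa using ball_mem_nhds 0 hδ)
  obtain ⟨t₂, ht₂, hdet⟩ := ((hball.filter_mono nhdsWithin_le_nhds).and
    (eventually_mul_ne_mul_of_hasDerivAt_zero hline (by simp [ha0]) hat₁)).exists
  exact ⟨t₁, t₂, ht₁, ht₂, linearIndependent_withLast_smul_pair (by simp [e]) hdet⟩

/-- Step in Proposition 3.7: if `t ↦ a(t e_i)` is not identically zero near `0`, there
are `t₁, t₂` with `t₁e_i + a(t₁e_i)e_N` and `t₂e_i + a(t₂e_i)e_N` linearly independent. -/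
theorem linearly_independent_graph_vectors
    {N : ℕ} (hN : 1 ≤ N) (δ : ℝ) (hδ : 0 < δ) (i : Fin N)
    (a : Euc N → ℝ) (ha : ContDiffOn ℝ 1 a (ball (0 : Euc N) δ))
    (ha0 : a 0 = 0)
    (hai : fderiv ℝ a 0 (EuclideanSpace.single i 1) = 0)
    (hne : ∃ t : ℝ, t • (EuclideanSpace.single i 1 : Euc N) ∈ ball (0 : Euc N) δ ∧
      a (t • EuclideanSpace.single i 1) ≠ 0) :
    ∃ t₁ t₂ : ℝ,
      t₁ • (EuclideanSpace.single i 1 : Euc N) ∈ ball (0 : Euc N) δ ∧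
      t₂ • (EuclideanSpace.single i 1 : Euc N) ∈ ball (0 : Euc N) δ ∧
      LinearIndependent ℝ
        ![withLast (t₁ • EuclideanSpace.single i 1) (a (t₁ • EuclideanSpace.single i 1)),
          withLast (t₂ • EuclideanSpace.single i 1) (a (t₂ • EuclideanSpace.single i 1))] :=
  linearly_independent_graph_vectors_general δ hδ i a ha ha0 hai hne
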